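/- arXiv:2504.14767 — 3 statements merged into one kernel-verified Lean document; each statement's English description precedes it below -/
import Mathlib

section
/- Let ψ : ℝ → ℝ be measurable with ψ(-x) = ψ(x) for all x. For the unbalanced step-reinforced random walk (X_n), one has E[ψ(X_k)] = E[ψ(ξ_1)] for every integer k ≥ 1. -/
open MeasureTheory ProbabilityTheory Filter Real Topology
open scoped ENNReal NNReal

/-- The unbalanced step-reinforced random walk with parameters `(p, α)`:
`X 1 = ξ 1` and `X (n+1) = γ n * ρ n * X (U n) + (1 - γ n) * ξ (n+1)`, where the
`ξ` are i.i.d., `γ n` is Bernoulli(α), `ρ n` is ±1-valued with `P(ρ n = 1) = p`,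
`U n` is uniform on `{1, …, n}`, and all these basic variables are mutually independent. -/
structure URW (Ω : Type*) [MeasureSpace Ω] (p α : ℝ) where
  ξ : ℕ → Ω → ℝ
  γ : ℕ → Ω → ℝ
  ρ : ℕ → Ω → ℝ
  U : ℕ → Ω → ℕ
  X : ℕ → Ω → ℝ
  hprob : IsProbabilityMeasure (ℙ : Measure Ω)
  hp : p ∈ Set.Icc (0:ℝ) 1
  hα : α ∈ Set.Icc (0:ℝ) 1
  meas_ξ : ∀ n, Measurable (ξ n)
  meas_γ : ∀ n, Measurable (γ n)
  meas_ρ : ∀ n, Measurable (ρ n)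
  meas_U : ∀ n, Measurable (U n)
  meas_X : ∀ n, Measurable (X n)
  ident_ξ : ∀ n ≥ 1, IdentDistrib (ξ n) (ξ 1) ℙ ℙ
  lawγ1 : ∀ n ≥ 1, (ℙ : Measure Ω) (γ n ⁻¹' {1}) = ENNReal.ofReal α
  lawγ0 : ∀ n ≥ 1, (ℙ : Measure Ω) (γ n ⁻¹' {0}) = ENNReal.ofReal (1 - α)
  lawρ1 : ∀ n ≥ 1, (ℙ : Measure Ω) (ρ n ⁻¹' {1}) = ENNReal.ofReal p
  lawρm1 : ∀ n ≥ 1, (ℙ : Measure Ω) (ρ n ⁻¹' {-1}) = ENNReal.ofReal (1 - p)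
  rangeU : ∀ n ≥ 1, ∀ ω, U n ω ∈ Finset.Icc 1 n
  lawU : ∀ n ≥ 1, ∀ k ∈ Finset.Icc 1 n, (ℙ : Measure Ω) (U n ⁻¹' {k}) = (n : ℝ≥0∞)⁻¹
  indep : iIndepFun
    (fun (i : ℕ × Fin 4) => ![ξ i.1, γ i.1, ρ i.1, fun ω => (U i.1 ω : ℝ)] i.2) ℙ
  hX1 : ∀ ω, X 1 ω = ξ 1 ω
  hXrec : ∀ n ≥ 1, ∀ ω, X (n+1) ω = γ n ω * ρ n ω * X (U n ω) ω + (1 - γ n ω) * ξ (n+1) ω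

namespace URW

variable {Ω : Type*} [MeasureSpace Ω] {p α : ℝ}

/-- Position of the walker: `T n = X 1 + ⋯ + X n`. -/
def T (W : URW Ω p α) (n : ℕ) (ω : Ω) : ℝ := ∑ k ∈ Finset.Icc 1 n, W.X k ω

/-- First moment of a step. -/
noncomputable def μ₁ (W : URW Ω p α) : ℝ := ∫ ω, W.ξ 1 ω

/-- Second moment of a step. -/
noncomputable def μ₂ (W : URW Ω p α) : ℝ := ∫ ω, (W.ξ 1 ω)^2

end URW

/-- `aseq a n = ∏_{k=1}^{n-1} (1 + a/k)⁻¹`, the martingale normalizing sequence. -/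
noncomputable def aseq (a : ℝ) (n : ℕ) : ℝ := ∏ k ∈ Finset.Icc 1 (n-1), (1 + a / k)⁻¹

/-! Since `ψ` is even, `ψ ∘ X k = (ψ ∘ abs) ∘ X k`, so it suffices that `|X k|` has the law
of `|ξ 1|`; this is proved by strong induction. Up to a null set, `{γ n = 0}` and the sets
`{γ n = 1, U n = m}`, `1 ≤ m ≤ n`, partition `Ω`; on the first `X (n+1) = ξ (n+1)`, on the others
`|X (n+1)| = |ρ n| |X m| = |X m|`. The pair `(γ n, U n)` is independent of `ξ (n+1)` and of
`X m` for `m ≤ n`, which depend only on the basic variables with smaller index, hence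
`P(|X (n+1)| ∈ B) = (1 - α) q + ∑ₘ (α / n) q = q` with `q = P(|ξ 1| ∈ B)`. -/

lemma ae_eq_or_eq_of_measure_add_eq_one {Ω β : Type*} [MeasurableSpace Ω] [MeasurableSpace β]
    [MeasurableSingletonClass β] {μ : Measure Ω} [IsProbabilityMeasure μ] {f : Ω → β}
    (hf : Measurable f) {a b : β} (hab : a ≠ b) (h : μ (f ⁻¹' {a}) + μ (f ⁻¹' {b}) = 1) :
    ∀ᵐ ω ∂μ, f ω = a ∨ f ω = b := by
  have hpair : {ω | f ω = a ∨ f ω = b} = f ⁻¹' {a} ∪ f ⁻¹' {b} := rfl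
  have hb : MeasurableSet (f ⁻¹' {b}) := hf (measurableSet_singleton b)
  rw [ae_iff_measure_eq (hpair ▸ ((hf (measurableSet_singleton a)).union hb).nullMeasurableSet),
    hpair, measure_union ((Set.disjoint_singleton.2 hab).preimage f) hb, h, measure_univ]

namespace URW

variable {Ω : Type*} [MeasureSpace Ω] {p α : ℝ} (W : URW Ω p α)

-- The index `(n, j)` stands for `ξ n`, `γ n`, `ρ n`, `U n` for `j = 0, 1, 2, 3`, as in `URW.indep`.
def basicVar (i : ℕ × Fin 4) : Ω → ℝ :=
  ![W.ξ i.1, W.γ i.1, W.ρ i.1, fun ω => (W.U i.1 ω : ℝ)] i.2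

lemma measurable_basicVar (i : ℕ × Fin 4) : Measurable (W.basicVar i) := by
  obtain ⟨n, j⟩ := i
  fin_cases j
  exacts [W.meas_ξ n, W.meas_γ n, W.meas_ρ n,
    (measurable_from_nat (f := ((↑) : ℕ → ℝ))).comp (W.meas_U n)]

abbrev basicSigma (S : Set (ℕ × Fin 4)) : MeasurableSpace Ω :=
  ⨆ i ∈ S, MeasurableSpace.comap (W.basicVar i) inferInstance

lemma measurable_basicVar_basicSigma {S : Set (ℕ × Fin 4)} {i : ℕ × Fin 4} (hi : i ∈ S) :
    Measurable[W.basicSigma S] (W.basicVar i) :=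
  (Measurable.of_comap_le le_rfl).mono
    (le_iSup₂ (f := fun i (_ : i ∈ S) => MeasurableSpace.comap (W.basicVar i) inferInstance) i hi)
    le_rfl

lemma basicSigma_mono {S T : Set (ℕ × Fin 4)} (h : S ⊆ T) : W.basicSigma S ≤ W.basicSigma T :=
  biSup_mono h

lemma indep_basicSigma {S T : Set (ℕ × Fin 4)} (h : Disjoint S T) :
    Indep (W.basicSigma S) (W.basicSigma T) ℙ :=
  indep_iSup_of_disjoint (fun i => (W.measurable_basicVar i).comap_le) W.indep h

lemma measurable_ξ_basicSigma {S : Set (ℕ × Fin 4)} {n : ℕ} (h : (n, 0) ∈ S) :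
    Measurable[W.basicSigma S] (W.ξ n) :=
  W.measurable_basicVar_basicSigma h

lemma measurable_γ_basicSigma {S : Set (ℕ × Fin 4)} {n : ℕ} (h : (n, 1) ∈ S) :
    Measurable[W.basicSigma S] (W.γ n) :=
  W.measurable_basicVar_basicSigma h

lemma measurable_ρ_basicSigma {S : Set (ℕ × Fin 4)} {n : ℕ} (h : (n, 2) ∈ S) :
    Measurable[W.basicSigma S] (W.ρ n) :=
  W.measurable_basicVar_basicSigma h

lemma measurableSet_U_preimage {S : Set (ℕ × Fin 4)} {n : ℕ} (h : (n, 3) ∈ S) (m : ℕ) :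
    MeasurableSet[W.basicSigma S] (W.U n ⁻¹' {m}) := by
  have : W.U n ⁻¹' {m} = W.basicVar (n, 3) ⁻¹' {(m : ℝ)} := by ext; simp [basicVar]
  exact this ▸ W.measurable_basicVar_basicSigma h (measurableSet_singleton _)

lemma X_U_eq_sum {n : ℕ} (hn : 1 ≤ n) (ω : Ω) :
    W.X (W.U n ω) ω = ∑ j ∈ Finset.Icc 1 n, (W.U n ⁻¹' {j}).indicator (W.X j) ω := by
  have hoff : ∀ j ∈ Finset.Icc 1 n, j ≠ W.U n ω →
      (W.U n ⁻¹' {j}).indicator (W.X j) ω = 0 :=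
    fun j _ hj => Set.indicator_of_notMem (s := W.U n ⁻¹' {j}) (Ne.symm hj) _
  rw [Finset.sum_eq_single_of_mem _ (W.rangeU n hn ω) hoff]
  simp

def past (k : ℕ) : Set (ℕ × Fin 4) := {i | i.1 < k ∨ i = (k, 0)}

lemma measurable_X_past {k : ℕ} (hk : 1 ≤ k) : Measurable[W.basicSigma (past k)] (W.X k) := by
  induction k using Nat.strong_induction_on with
  | _ k ih =>
    obtain ⟨n, rfl⟩ := Nat.exists_eq_add_of_le' hk
    rcases n.eq_zero_or_pos with rfl | hn
    · exact funext W.hX1 ▸ W.measurable_ξ_basicSigma (Or.inr rfl)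
    have hpast : ∀ {i : ℕ × Fin 4}, i.1 < n + 1 → i ∈ past (n + 1) := Or.inl
    have hγ := W.measurable_γ_basicSigma (hpast (i := (n, 1)) n.lt_succ_self)
    have hρ := W.measurable_ρ_basicSigma (hpast (i := (n, 2)) n.lt_succ_self)
    have hξ := W.measurable_ξ_basicSigma (S := past (n + 1)) (Or.inr rfl)
    have hXU : Measurable[W.basicSigma (past (n + 1))] fun ω => W.X (W.U n ω) ω := by
      simp_rw [W.X_U_eq_sum hn]
      refine Finset.measurable_sum _ fun j hj => ?_
      obtain ⟨hj1, hjn⟩ := Finset.mem_Icc.1 hj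
      refine Measurable.indicator ((ih j (by omega) hj1).mono ?_ le_rfl)
        (W.measurableSet_U_preimage (hpast n.lt_succ_self) j)
      refine W.basicSigma_mono fun i hi => ?_
      rcases hi with hi | rfl
      exacts [Or.inl (by omega), Or.inl (by simp only; omega)]
    rw [funext (W.hXrec n hn)]
    exact ((hγ.mul hρ).mul hXU).add ((measurable_const.sub hγ).mul hξ)

lemma disjoint_past {m n : ℕ} (hmn : m ≤ n) : Disjoint (past m) {(n, 1), (n, 3)} := by
  rw [Set.disjoint_left]
  rintro ⟨l, j⟩ (hl | hl) hj <;> simp_all; omega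

lemma ae_γ_eq_zero_or_eq_one {n : ℕ} (hn : 1 ≤ n) : ∀ᵐ ω, W.γ n ω = 0 ∨ W.γ n ω = 1 := by
  have := W.hprob
  refine ae_eq_or_eq_of_measure_add_eq_one (W.meas_γ n) zero_ne_one ?_
  rw [W.lawγ0 n hn, W.lawγ1 n hn, ← ENNReal.ofReal_add (by linarith [W.hα.2]) W.hα.1]
  simp

lemma ae_abs_ρ_eq_one {n : ℕ} (hn : 1 ≤ n) : ∀ᵐ ω, |W.ρ n ω| = 1 := by
  have := W.hprob
  have h := ae_eq_or_eq_of_measure_add_eq_one (W.meas_ρ n) (by norm_num : (1 : ℝ) ≠ -1) (by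
    rw [W.lawρ1 n hn, W.lawρm1 n hn, ← ENNReal.ofReal_add W.hp.1 (by linarith [W.hp.2])]
    simp)
  filter_upwards [h] with ω hω
  rcases hω with hω | hω <;> simp [hω]

lemma measure_eq_add_sum {n : ℕ} (hn : 1 ≤ n) (S : Set Ω) :
    ℙ S = ℙ (W.γ n ⁻¹' {0} ∩ S) +
      ∑ m ∈ Finset.Icc 1 n, ℙ (W.U n ⁻¹' {m} ∩ W.γ n ⁻¹' {1} ∩ S) := by
  have hγ0 : MeasurableSet (W.γ n ⁻¹' {0}) := W.meas_γ n (measurableSet_singleton 0)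
  have hrest : (S \ W.γ n ⁻¹' {0} : Set Ω) =ᵐ[ℙ] (W.γ n ⁻¹' {1} ∩ S : Set Ω) := by
    rw [eventuallyEq_set]
    filter_upwards [W.ae_γ_eq_zero_or_eq_one hn] with ω hω
    rcases hω with hω | hω <;> simp [hω]
  have hfibres : ∑ m ∈ Finset.Icc 1 n, ℙ (W.U n ⁻¹' {m} ∩ (W.γ n ⁻¹' {1} ∩ S)) =
      ℙ (W.γ n ⁻¹' {1} ∩ S) := by
    simp_rw [← Measure.restrict_apply (W.meas_U n (measurableSet_singleton _))]
    have hU : W.U n ⁻¹' (Finset.Icc 1 n : Set ℕ) = Set.univ :=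
      Set.eq_univ_of_forall fun ω => W.rangeU n hn ω
    rw [sum_measure_preimage_singleton _ fun m _ => W.meas_U n (measurableSet_singleton m), hU,
      Measure.restrict_apply_univ]
  rw [← measure_inter_add_sdiff S hγ0, Set.inter_comm, measure_congr hrest, ← hfibres]
  simp only [Set.inter_assoc]

lemma measure_γ_zero_inter_ξ {n : ℕ} (hn : 1 ≤ n) {C : Set ℝ} (hC : MeasurableSet C) :
    ℙ (W.γ n ⁻¹' {0} ∩ W.ξ (n + 1) ⁻¹' C) = ENNReal.ofReal (1 - α) * ℙ (W.ξ 1 ⁻¹' C) := by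
  have hindep : Indep (W.basicSigma {(n, 1)}) (W.basicSigma {(n + 1, 0)}) ℙ :=
    W.indep_basicSigma (by simp)
  rw [(Indep_iff _ _ _).1 hindep _ _
      (W.measurable_γ_basicSigma (Set.mem_singleton _) (measurableSet_singleton 0))
      (W.measurable_ξ_basicSigma (Set.mem_singleton _) hC),
    W.lawγ0 n hn, (W.ident_ξ (n + 1) (by omega)).measure_mem_eq hC]

lemma measure_U_inter_γ_one_inter {m n : ℕ} (hn : 1 ≤ n) (hm : m ∈ Finset.Icc 1 n) {A : Set Ω}
    (hA : MeasurableSet[W.basicSigma (past m)] A) :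
    ℙ (W.U n ⁻¹' {m} ∩ W.γ n ⁻¹' {1} ∩ A) = (n : ℝ≥0∞)⁻¹ * ENNReal.ofReal α * ℙ A := by
  have hU := W.measurableSet_U_preimage (Set.mem_singleton (n, 3)) m
  have hγ := W.measurable_γ_basicSigma (Set.mem_singleton (n, 1)) (measurableSet_singleton 1)
  have hUγ : ℙ (W.U n ⁻¹' {m} ∩ W.γ n ⁻¹' {1}) = (n : ℝ≥0∞)⁻¹ * ENNReal.ofReal α := by
    rw [(Indep_iff _ _ _).1 (W.indep_basicSigma (by simp)) _ _ hU hγ, W.lawU n hn m hm,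
      W.lawγ1 n hn]
  have hpiece : MeasurableSet[W.basicSigma {(n, 1), (n, 3)}] (W.U n ⁻¹' {m} ∩ W.γ n ⁻¹' {1}) :=
    (W.measurableSet_U_preimage (by simp) m).inter
      (W.measurable_γ_basicSigma (by simp) (measurableSet_singleton 1))
  rw [(Indep_iff _ _ _).1 (W.indep_basicSigma (disjoint_past (Finset.mem_Icc.1 hm).2)).symm _ _
    hpiece hA, hUγ]

lemma γ_zero_inter_abs_X_succ {n : ℕ} (hn : 1 ≤ n) (B : Set ℝ) :
    W.γ n ⁻¹' {0} ∩ (fun ω => |W.X (n + 1) ω|) ⁻¹' B =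
      W.γ n ⁻¹' {0} ∩ W.ξ (n + 1) ⁻¹' (abs ⁻¹' B) := by
  ext ω
  simp +contextual [W.hXrec n hn ω]

lemma U_inter_γ_one_inter_abs_X_succ {n : ℕ} (hn : 1 ≤ n) (m : ℕ) (B : Set ℝ) :
    (W.U n ⁻¹' {m} ∩ W.γ n ⁻¹' {1} ∩ (fun ω => |W.X (n + 1) ω|) ⁻¹' B : Set Ω) =ᵐ[ℙ]
      (W.U n ⁻¹' {m} ∩ W.γ n ⁻¹' {1} ∩ (fun ω => |W.X m ω|) ⁻¹' B : Set Ω) := by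
  rw [eventuallyEq_set]
  filter_upwards [W.ae_abs_ρ_eq_one hn] with ω hρ
  simp +contextual [W.hXrec n hn ω, abs_mul, hρ]

theorem measure_abs_X_preimage {B : Set ℝ} (hB : MeasurableSet B) {k : ℕ} (hk : 1 ≤ k) :
    ℙ ((fun ω => |W.X k ω|) ⁻¹' B) = ℙ ((fun ω => |W.ξ 1 ω|) ⁻¹' B) := by
  induction k using Nat.strong_induction_on with
  | _ k ih =>
    obtain ⟨n, rfl⟩ := Nat.exists_eq_add_of_le' hk
    rcases n.eq_zero_or_pos with rfl | hn
    · simp only [W.hX1]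
    have hB' : MeasurableSet (abs ⁻¹' B : Set ℝ) := measurable_abs hB
    calc ℙ ((fun ω => |W.X (n + 1) ω|) ⁻¹' B)
        = ℙ (W.γ n ⁻¹' {0} ∩ W.ξ (n + 1) ⁻¹' (abs ⁻¹' B)) + ∑ m ∈ Finset.Icc 1 n,
            ℙ (W.U n ⁻¹' {m} ∩ W.γ n ⁻¹' {1} ∩ (fun ω => |W.X m ω|) ⁻¹' B) := by
          rw [W.measure_eq_add_sum hn, W.γ_zero_inter_abs_X_succ hn]
          simp_rw [measure_congr (W.U_inter_γ_one_inter_abs_X_succ hn _ B)]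
      _ = ENNReal.ofReal (1 - α) * ℙ ((fun ω => |W.ξ 1 ω|) ⁻¹' B) + ∑ m ∈ Finset.Icc 1 n,
            (n : ℝ≥0∞)⁻¹ * ENNReal.ofReal α * ℙ ((fun ω => |W.ξ 1 ω|) ⁻¹' B) := by
          rw [W.measure_γ_zero_inter_ξ hn hB']
          refine congrArg _ (Finset.sum_congr rfl fun m hm => ?_)
          obtain ⟨hm1, hmn⟩ := Finset.mem_Icc.1 hm
          rw [W.measure_U_inter_γ_one_inter hn hm (A := (fun ω => |W.X m ω|) ⁻¹' B)
              (W.measurable_X_past hm1 hB'),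
            ih m (by omega) hm1]
      _ = ℙ ((fun ω => |W.ξ 1 ω|) ⁻¹' B) := by
          rw [Finset.sum_const, Nat.card_Icc, add_tsub_cancel_right, nsmul_eq_mul, ← mul_assoc,
            ← mul_assoc, ENNReal.mul_inv_cancel (by exact_mod_cast hn.ne') (by simp), one_mul,
            ← add_mul, ← ENNReal.ofReal_add (by linarith [W.hα.2]) W.hα.1]
          simp

theorem identDistrib_abs_X {k : ℕ} (hk : 1 ≤ k) :
    IdentDistrib (fun ω => |W.X k ω|) (fun ω => |W.ξ 1 ω|) ℙ ℙ where
  aemeasurable_fst := ((W.meas_X k).abs).aemeasurable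
  aemeasurable_snd := ((W.meas_ξ 1).abs).aemeasurable
  map_eq := Measure.ext fun B hB => by
    rw [Measure.map_apply ((W.meas_X k).abs) hB, Measure.map_apply ((W.meas_ξ 1).abs) hB,
      W.measure_abs_X_preimage hB hk]

end URW

theorem stmt0_general {Ω : Type*} [MeasureSpace Ω] {p α : ℝ} (W : URW Ω p α)
    (ψ : ℝ → ℝ) (hψmeas : Measurable ψ) (hψeven : ∀ x : ℝ, ψ (-x) = ψ x) :
    ∀ k : ℕ, 1 ≤ k → ∫ ω, ψ (W.X k ω) = ∫ ω, ψ (W.ξ 1 ω) := by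
  have hψabs : ∀ x, ψ |x| = ψ x := fun x => by
    rcases abs_choice x with h | h <;> simp [h, hψeven]
  intro k hk
  simpa only [Function.comp_def, hψabs] using ((W.identDistrib_abs_X hk).comp hψmeas).integral_eq

theorem stmt0 {Ω : Type*} [MeasureSpace Ω] {p α : ℝ} (W : URW Ω p α)
    (ψ : ℝ → ℝ) (hψmeas : Measurable ψ) (hψeven : ∀ x : ℝ, ψ (-x) = ψ x)
    (hint : Integrable (fun ω => ψ (W.ξ 1 ω)) ℙ) :
    ∀ k : ℕ, 1 ≤ k → ∫ ω, ψ (W.X k ω) = ∫ ω, ψ (W.ξ 1 ω) :=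
  stmt0_general W ψ hψmeas hψeven
end

section
/- Let (s_k)_{k≥1} be a real sequence with s_k → s, let x_1 ∈ ℝ and -1 ≤ t < 1, and define recursively x_{k+1} = s_k + (t/k) ∑_{j=1}^k x_j. Then the sequence (x_k) converges and lim_k x_k = lim_k (1/k) ∑_{j=1}^k x_j = s/(1-t). -/
open Filter Topology

private lemma key_aux (c : ℝ) (hc : 0 < c) (hc2 : c ≤ 2) (u e : ℕ → ℝ)
    (hu : ∀ k, 0 ≤ u k) (he0 : ∀ k, 0 ≤ e k) (he : Tendsto e atTop (𝓝 0))
    (hrec : ∀ k, 1 ≤ k → u (k+1) ≤ (1 - c/((k:ℝ)+1)) * u k + e k/((k:ℝ)+1)) :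
    Tendsto u atTop (𝓝 0) := by
  rw [Metric.tendsto_atTop]
  intro ε hε
  obtain ⟨N0, hN0⟩ := Metric.tendsto_atTop.mp he (c*ε/4) (by positivity)
  set N := max N0 1 with hN
  have hN1 : 1 ≤ N := le_max_right _ _
  have heN : ∀ k, N ≤ k → e k ≤ c*ε/4 := by
    intro k hk
    have := hN0 k (le_trans (le_max_left _ _) hk)
    rw [Real.dist_eq, sub_zero, abs_of_nonneg (he0 k)] at this
    linarith
  have hfacts : ∀ k, N ≤ k → (0 < ((k:ℝ)+1) ∧ (2:ℝ) ≤ (k:ℝ)+1 ∧ 0 ≤ c/((k:ℝ)+1)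
      ∧ c/((k:ℝ)+1) ≤ 1) := by
    intro k hk
    have hk1 : 1 ≤ k := le_trans hN1 hk
    have h1 : (1:ℝ) ≤ (k:ℝ) := by exact_mod_cast hk1
    have hK : (0:ℝ) < (k:ℝ)+1 := by linarith
    refine ⟨hK, by linarith, by positivity, ?_⟩
    rw [div_le_one hK]; linarith
  have stay : ∀ k, N ≤ k → u k ≤ ε/2 → u (k+1) ≤ ε/2 := by
    intro k hk huk
    obtain ⟨hK, hK2, hd0, hd1⟩ := hfacts k hk
    have h1 := hrec k (le_trans hN1 hk)
    have h2 : e k / ((k:ℝ)+1) ≤ (c*ε/4) / ((k:ℝ)+1) := by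
      gcongr
      exact heN k hk
    have h3 : (1 - c/((k:ℝ)+1)) * u k ≤ (1 - c/((k:ℝ)+1)) * (ε/2) :=
      mul_le_mul_of_nonneg_left huk (by linarith)
    have heq : (1 - c/((k:ℝ)+1)) * (ε/2) + (c*ε/4)/((k:ℝ)+1)
        = ε/2 - (c*ε/4)/((k:ℝ)+1) := by
      field_simp
      ring
    have hpos : 0 ≤ (c*ε/4)/((k:ℝ)+1) := by positivity
    linarith
  have descent : ∀ k, N ≤ k → ε/2 < u k → u (k+1) ≤ u k - (c*ε/4)/((k:ℝ)+1) := by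
    intro k hk huk
    obtain ⟨hK, hK2, hd0, hd1⟩ := hfacts k hk
    have h1 := hrec k (le_trans hN1 hk)
    have h2 : e k / ((k:ℝ)+1) ≤ (c*ε/4) / ((k:ℝ)+1) := by
      gcongr
      exact heN k hk
    have h3 : (c/((k:ℝ)+1)) * (ε/2) ≤ (c/((k:ℝ)+1)) * u k :=
      mul_le_mul_of_nonneg_left (le_of_lt huk) hd0
    have heq : (c/((k:ℝ)+1)) * (ε/2) = (c*ε/4)/((k:ℝ)+1) + (c*ε/4)/((k:ℝ)+1) := by
      field_simp
      ring
    nlinarith [hu k]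
  set D := c*ε/4 with hD
  have hDpos : 0 < D := by positivity
  set H : ℕ → ℝ := fun n => ∑ i ∈ Finset.range n, (1 / ((i:ℝ) + 1)) with hH
  have hexists : ∃ m, N ≤ m ∧ u m ≤ ε/2 := by
    by_contra hcon
    push_neg at hcon
    have claim : ∀ k, u (N+k) + D * (H (N+k) - H N) ≤ u N := by
      intro k
      induction k with
      | zero => simp
      | succ k ih =>
        have hNk : N ≤ N+k := Nat.le_add_right _ _
        have hd := descent (N+k) hNk (hcon _ hNk)
        have hHs : H (N+k+1) = H (N+k) + 1/(((N+k:ℕ):ℝ)+1) := by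
          rw [hH]
          exact Finset.sum_range_succ _ _
        have hstep : N + (k+1) = N + k + 1 := rfl
        rw [hstep, hHs]
        have hexp : D * ((H (N+k) + 1/(((N+k:ℕ):ℝ)+1)) - H N)
            = D * (H (N+k) - H N) + D / (((N+k:ℕ):ℝ)+1) := by ring
        linarith [hd, ih]
    obtain ⟨m, hBm, hmN⟩ := ((tendsto_atTop.mp Real.tendsto_sum_range_one_div_nat_succ_atTop
      (H N + u N / D + 1)).and (eventually_ge_atTop N)).exists
    have hBm' : H N + u N / D + 1 ≤ H m := hBm
    have hmeq : N + (m - N) = m := Nat.add_sub_cancel' hmN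
    have hcl := claim (m - N)
    rw [hmeq] at hcl
    have hDu : D * (u N / D) = u N := by field_simp
    have h5 : D * (H m - H N) ≥ D * (u N / D + 1) :=
      mul_le_mul_of_nonneg_left (by linarith) (le_of_lt hDpos)
    have := hu m
    nlinarith
  obtain ⟨m, hmN, hm⟩ := hexists
  refine ⟨m, fun k hk => ?_⟩
  have hall : ∀ k, m ≤ k → u k ≤ ε/2 := by
    intro k hk
    induction k, hk using Nat.le_induction with
    | base => exact hm
    | succ k hk ih => exact stay k (le_trans hmN hk) ih
  rw [Real.dist_eq, sub_zero, abs_of_nonneg (hu k)]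
  have := hall k hk
  linarith

theorem stmt1 (s : ℕ → ℝ) (slim : ℝ) (hs : Tendsto s atTop (𝓝 slim))
    (t : ℝ) (ht : -1 ≤ t) (ht' : t < 1) (x : ℕ → ℝ)
    (hrec : ∀ k : ℕ, 1 ≤ k → x (k+1) = s k + (t / k) * ∑ j ∈ Finset.Icc 1 k, x j) :
    Tendsto x atTop (𝓝 (slim / (1 - t))) ∧
      Tendsto (fun k : ℕ => (1 / (k:ℝ)) * ∑ j ∈ Finset.Icc 1 k, x j) atTop
        (𝓝 (slim / (1 - t))) := by
  have ht0 : (0:ℝ) < 1 - t := by linarith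
  set L := slim / (1 - t) with hL
  set a : ℕ → ℝ := fun k => (1/(k:ℝ)) * ∑ j ∈ Finset.Icc 1 k, x j with ha
  have hLs : L * (1 - t) = slim := by
    rw [hL]; field_simp
  -- recursion for a
  have hrec_a : ∀ k, 1 ≤ k →
      a (k+1) = (1 - (1-t)/((k:ℝ)+1)) * a k + s k / ((k:ℝ)+1) := by
    intro k hk
    have hk0 : ((k:ℝ)) ≠ 0 := by
      have : (1:ℝ) ≤ (k:ℝ) := by exact_mod_cast hk
      linarith
    have hk1 : ((k:ℝ)+1) ≠ 0 := by
      have : (1:ℝ) ≤ (k:ℝ) := by exact_mod_cast hk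
      linarith
    have hsum : ∑ j ∈ Finset.Icc 1 (k+1), x j
        = (∑ j ∈ Finset.Icc 1 k, x j) + x (k+1) :=
      Finset.sum_Icc_succ_top (Nat.one_le_iff_ne_zero.mpr (by omega)) _
    simp only [ha]
    rw [hsum, hrec k hk]
    push_cast
    field_simp
    ring
  -- recursion for b = a - L
  have hb : ∀ k, 1 ≤ k →
      a (k+1) - L = (1 - (1-t)/((k:ℝ)+1)) * (a k - L) + (s k - slim) / ((k:ℝ)+1) := by
    intro k hk
    have hk1 : ((k:ℝ)+1) ≠ 0 := by
      have : (1:ℝ) ≤ (k:ℝ) := by exact_mod_cast hk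
      linarith
    rw [hrec_a k hk]
    linear_combination (-(1/((k:ℝ)+1))) * hLs
  set u : ℕ → ℝ := fun k => |a k - L| with hu
  set e : ℕ → ℝ := fun k => |s k - slim| with he
  have he_lim : Tendsto e atTop (𝓝 0) := by
    have h1 : Tendsto (fun k => s k - slim) atTop (𝓝 0) := by
      simpa using hs.sub_const slim
    rw [he]
    simpa using h1.abs
  have hu_rec : ∀ k, 1 ≤ k →
      u (k+1) ≤ (1 - (1-t)/((k:ℝ)+1)) * u k + e k/((k:ℝ)+1) := by
    intro k hk
    have hkr : (1:ℝ) ≤ (k:ℝ) := by exact_mod_cast hk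
    have hK : (0:ℝ) < (k:ℝ)+1 := by linarith
    have hcoef : 0 ≤ 1 - (1-t)/((k:ℝ)+1) := by
      have : (1-t)/((k:ℝ)+1) ≤ 1 := by
        rw [div_le_one hK]; linarith
      linarith
    simp only [hu, he]
    rw [hb k hk]
    calc |(1 - (1-t)/((k:ℝ)+1)) * (a k - L) + (s k - slim) / ((k:ℝ)+1)|
        ≤ |(1 - (1-t)/((k:ℝ)+1)) * (a k - L)| + |(s k - slim) / ((k:ℝ)+1)| := abs_add_le _ _
      _ = (1 - (1-t)/((k:ℝ)+1)) * |a k - L| + |s k - slim| / ((k:ℝ)+1) := by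
          rw [abs_mul, abs_div, abs_of_nonneg hcoef, abs_of_pos hK]
  have hu0 : Tendsto u atTop (𝓝 0) :=
    key_aux (1-t) ht0 (by linarith) u e (fun k => abs_nonneg _) (fun k => abs_nonneg _)
      he_lim hu_rec
  have ha_lim : Tendsto a atTop (𝓝 L) := by
    have h1 : Tendsto (fun k => a k - L) atTop (𝓝 0) :=
      (tendsto_zero_iff_abs_tendsto_zero _).mpr hu0
    have := h1.add_const L
    simpa using this
  refine ⟨?_, ha_lim⟩
  -- x part
  have hx : ∀ k, 1 ≤ k → x (k+1) = s k + t * a k := by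
    intro k hk
    rw [hrec k hk]
    simp only [ha]
    ring
  have hlim2 : Tendsto (fun k => s k + t * a k) atTop (𝓝 (slim + t * L)) :=
    hs.add (ha_lim.const_mul t)
  have hLval : slim + t * L = L := by
    rw [hL]; field_simp; ring
  rw [hLval] at hlim2
  have hx1 : Tendsto (fun k => x (k+1)) atTop (𝓝 L) := by
    apply hlim2.congr'
    filter_upwards [eventually_ge_atTop 1] with k hk
    exact (hx k hk).symm
  exact (tendsto_add_atTop_iff_nat 1).mp hx1
end

section
/- For a = 1/2, with a_n = ∏_{k=1}^{n-1}(1+1/(2k))^{-1} (a_1 = 1) and v_n = ∑_{k=1}^n a_k^2, one has v_n ~ (π/4) log n as n → ∞, i.e. lim_{n→∞} v_n/((π/4) log n) = 1. -/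
open MeasureTheory ProbabilityTheory Filter Real Topology
open scoped ENNReal NNReal

/-!
For `a = 1/2` the factors of `a_{n+1}` are `2k/(2k+1)`, so `a_{n+1}²` is the partial Wallis
product `W n` divided by `2n + 1`, and Wallis' formula gives `(n+1) a_{n+1}² → π/4`.
Hence `a_{n+1}² ~ (π/4)/(n+1)`, and summing this against the harmonic series, whose partial sums
are `log n + O(1)`, gives `v_n ~ (π/4) log n`.
-/

open Asymptotics Finset

theorem isEquivalent_harmonic_log :
    (fun n : ℕ => (harmonic n : ℝ)) ~[atTop] fun n => log n := by
  have hlog : Tendsto (fun n : ℕ => log n) atTop atTop :=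
    tendsto_log_atTop.comp tendsto_natCast_atTop_atTop
  exact (tendsto_harmonic_sub_log.isBigO_one ℝ).trans_isLittleO
    (isLittleO_const_left.2 (Or.inr (tendsto_norm_atTop_atTop.comp hlog)))

theorem tendsto_sum_range_div_log_of_tendsto_mul {f : ℕ → ℝ} {c : ℝ}
    (hf : Tendsto (fun n : ℕ => ((n : ℝ) + 1) * f n) atTop (𝓝 c)) :
    Tendsto (fun n : ℕ => (∑ i ∈ range n, f i) / log n) atTop (𝓝 c) := by
  set g : ℕ → ℝ := fun i => ((i : ℝ) + 1)⁻¹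
  have hg_pos : ∀ i, 0 < g i := fun i => by positivity
  have hsum_g : ∀ n, ∑ i ∈ range n, g i = harmonic n := fun n => by
    simp [g, harmonic]
  have hf_g : (fun i => f i - c * g i) =o[atTop] g := by
    rw [isLittleO_iff_tendsto fun i hi => absurd hi (hg_pos i).ne']
    refine (tendsto_sub_nhds_zero_iff.2 hf).congr fun i => ?_
    have : ((i : ℝ) + 1) ≠ 0 := by positivity
    simp only [g]
    field_simp
  have hsum :
      (fun n => ∑ i ∈ range n, f i - c * harmonic n) =o[atTop] fun n => (harmonic n : ℝ) := by
    have hH : Tendsto (fun n => ∑ i ∈ range n, g i) atTop atTop := by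
      simpa only [hsum_g] using isEquivalent_harmonic_log.symm.tendsto_atTop
        (tendsto_log_atTop.comp tendsto_natCast_atTop_atTop)
    refine (hf_g.sum_range (fun i => (hg_pos i).le) hH).congr (fun n => ?_) fun n => hsum_g n
    rw [sum_sub_distrib, ← mul_sum, hsum_g]
  have hmain : (fun n => ∑ i ∈ range n, f i - c * log n) =o[atTop] fun n => log (n : ℝ) :=
    ((hsum.trans_isBigO isEquivalent_harmonic_log.isBigO).add
      (isEquivalent_harmonic_log.isLittleO.const_mul_left c)).congr
      (fun n => by simp only [Pi.sub_apply]; ring) fun n => rfl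
  rw [← zero_add c]
  refine (hmain.tendsto_div_nhds_zero.add_const c).congr' ?_
  filter_upwards [eventually_gt_atTop 1] with n hn
  have : log n ≠ 0 := (log_pos (by exact_mod_cast hn)).ne'
  field_simp
  ring

theorem aseq_succ_succ (a : ℝ) (n : ℕ) :
    aseq a (n + 2) = aseq a (n + 1) * (1 + a / (n + 1))⁻¹ := by
  change ∏ k ∈ Icc 1 (n + 1), _ = (∏ k ∈ Icc 1 n, _) * _
  rw [prod_Icc_succ_top (Nat.le_add_left 1 n)]
  push_cast
  rfl

theorem aseq_half_succ_sq (n : ℕ) : aseq (1 / 2) (n + 1) ^ 2 = Wallis.W n / (2 * n + 1) := by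
  induction n with
  | zero => simp [aseq, Wallis.W]
  | succ n ih =>
    rw [aseq_succ_succ, mul_pow, ih, Wallis.W_succ]
    push_cast
    field_simp
    ring

theorem tendsto_succ_mul_aseq_half_sq :
    Tendsto (fun n : ℕ => ((n : ℝ) + 1) * aseq (1 / 2) (n + 1) ^ 2) atTop (𝓝 (π / 4)) := by
  have hratio : Tendsto (fun n : ℕ => (1 + 1 * (n : ℝ)) / (1 + 2 * n)) atTop (𝓝 (1 / 2)) :=
    tendsto_add_mul_div_add_mul_atTop_nhds 1 1 1 two_ne_zero
  have h := Wallis.tendsto_W_nhds_pi_div_two.mul hratio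
  rw [show π / 2 * (1 / 2) = π / 4 by ring] at h
  refine h.congr fun n => ?_
  rw [aseq_half_succ_sq]
  field_simp
  ring

theorem stmt5 :
    Tendsto (fun n : ℕ => (∑ k ∈ Finset.Icc 1 n, (aseq (1/2) k)^2) /
      ((Real.pi / 4) * Real.log n)) atTop (𝓝 1) := by
  have hsum (n : ℕ) :
      ∑ k ∈ Icc 1 n, aseq (1 / 2) k ^ 2 = ∑ i ∈ range n, aseq (1 / 2) (i + 1) ^ 2 := by
    rw [← Ico_add_one_right_eq_Icc, sum_Ico_eq_sum_range, Nat.add_sub_cancel]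
    simp only [add_comm]
  have h :=
    (tendsto_sum_range_div_log_of_tendsto_mul tendsto_succ_mul_aseq_half_sq).div_const (π / 4)
  rw [div_self (by positivity)] at h
  refine h.congr fun n => ?_
  rw [hsum, div_div, mul_comm]
end
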